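/- For r₂ ≥ 0 and ϑ > 0 with ρ(ϑ) > r₂, set φ₁(ϑ; r₂) := ϑ·(ρ(ϑ) − r₂)/ρ(ϑ) and ρ¹(ϑ; r₂) := ρ(ϑ) − r₂ (the colour-1 fugacity and the colour-1 density at total fugacity ϑ and fixed colour-2 density r₂). There exists a finite constant L, independent of r₂ and depending only on a₁, a₂ and k₀, such that for all ϑ, ϑ′ > 0 with ρ(ϑ) > r₂ and ρ(ϑ′) > r₂: |φ₁(ϑ; r₂) − φ₁(ϑ′; r₂)| ≤ L·|ρ¹(ϑ; r₂) − ρ¹(ϑ′; r₂)|, and ρ¹(ϑ; r₂) < ρ¹(ϑ′; r₂) implies φ₁(ϑ; r₂) < φ₁(ϑ′; r₂). That is, the colour-1 fugacity φ₁, as a function of the colour-1 density ρ¹ at fixed colour-2 density, is Lipschitz and strictly increasing. -/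

import Mathlib

noncomputable section

/-- `c(k)! = ∏_{m=1}^k c(m)`, with `c(0)! = 1`. -/
def cfact (c : ℕ → ℝ) : ℕ → ℝ
  | 0 => 1
  | k + 1 => cfact c k * c (k + 1)

/-- The partition function `Z(φ) = ∑_{k ≥ 0} φ^k / c(k)!`. -/
def Zfun (c : ℕ → ℝ) (φ : ℝ) : ℝ := ∑' k : ℕ, φ ^ k / cfact c k

/-- The grand canonical single-site measure `μ_φ({k}) = φ^k / (Z(φ) c(k)!)`. -/
def mu (c : ℕ → ℝ) (φ : ℝ) (k : ℕ) : ℝ := φ ^ k / (Zfun c φ * cfact c k)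

/-- The mean `ρ(φ)` of `μ_φ`. -/
def rho (c : ℕ → ℝ) (φ : ℝ) : ℝ := ∑' k : ℕ, (k : ℝ) * mu c φ k

/-- The colour-1 fugacity at total fugacity `ϑ` and fixed colour-2 density `r₂`:
`φ₁(ϑ; r₂) = ϑ·(ρ(ϑ) − r₂)/ρ(ϑ)`. -/
def fug1 (c : ℕ → ℝ) (ϑ r₂ : ℝ) : ℝ := ϑ * (rho c ϑ - r₂) / rho c ϑ

/-- The colour-1 density at total fugacity `ϑ` and fixed colour-2 density `r₂`:
`ρ¹(ϑ; r₂) = ρ(ϑ) − r₂`. -/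
def dens1 (c : ℕ → ℝ) (ϑ r₂ : ℝ) : ℝ := rho c ϑ - r₂


section aux
variable {c : ℕ → ℝ} {a₁ a₂ : ℝ} {k₀ : ℕ} {ϑ ϑ' : ℝ}

lemma c_nonneg (h0 : c 0 = 0) (hc : ∀ k : ℕ, 1 ≤ k → 0 < c k) : ∀ k, 0 ≤ c k := by
  intro k
  cases k with
  | zero => simp [h0]
  | succ n => exact (hc _ (Nat.succ_le_succ (Nat.zero_le n))).le

lemma cfact_pos (hc : ∀ k : ℕ, 1 ≤ k → 0 < c k) : ∀ k, 0 < cfact c k := by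
  intro k
  induction k with
  | zero => norm_num [cfact]
  | succ n ih => exact mul_pos ih (hc _ (Nat.succ_le_succ (Nat.zero_le n)))

lemma c_lip (hLG : ∀ k : ℕ, |c (k + 1) - c k| ≤ a₁) :
    ∀ j k : ℕ, |c k - c j| ≤ a₁ * |(k : ℝ) - j| := by
  have key : ∀ j m : ℕ, |c (j + m) - c j| ≤ a₁ * m := by
    intro j m
    induction m with
    | zero => simp
    | succ n ih =>
      have h1 := hLG (j + n)
      calc |c (j + (n+1)) - c j| = |(c (j + n + 1) - c (j + n)) + (c (j + n) - c j)| := by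
            ring_nf
      _ ≤ |c (j + n + 1) - c (j + n)| + |c (j + n) - c j| := abs_add_le _ _
      _ ≤ a₁ + a₁ * n := add_le_add h1 ih
      _ = a₁ * (n + 1 : ℕ) := by push_cast; ring
  intro j k
  rcases le_total j k with h | h
  · obtain ⟨m, rfl⟩ := Nat.exists_eq_add_of_le h
    have := key j m
    have e : ((j + m : ℕ) : ℝ) - j = m := by push_cast; ring
    rw [e, abs_of_nonneg (by positivity : (0:ℝ) ≤ (m:ℝ))]
    exact this
  · obtain ⟨m, rfl⟩ := Nat.exists_eq_add_of_le h
    have := key k m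
    rw [abs_sub_comm]
    have e : ((k : ℝ)) - ((k + m : ℕ) : ℝ) = -m := by push_cast; ring
    rw [e, abs_neg, abs_of_nonneg (by positivity : (0:ℝ) ≤ (m:ℝ))]
    exact this

lemma c_large (h0 : c 0 = 0) (hc : ∀ k : ℕ, 1 ≤ k → 0 < c k)
    (hM : ∀ k : ℕ, a₂ ≤ c (k + k₀) - c k) (ha₂ : 0 < a₂) :
    ∀ M : ℝ, ∃ N : ℕ, ∀ k ≥ N, M ≤ c k := by
  have step : ∀ j m : ℕ, (m : ℝ) * a₂ ≤ c (j + m * k₀) := by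
    intro j m
    induction m with
    | zero => simpa using c_nonneg h0 hc j
    | succ n ih =>
      have h1 := hM (j + n * k₀)
      have : (j + (n+1) * k₀) = (j + n * k₀) + k₀ := by ring
      rw [this]
      push_cast
      nlinarith
  intro M
  obtain ⟨m, hm⟩ := exists_nat_ge (M / a₂)
  refine ⟨m * k₀, fun k hk => ?_⟩
  obtain ⟨j, rfl⟩ := Nat.exists_eq_add_of_le hk
  have := step j m
  rw [Nat.add_comm] at this
  have hMm : M ≤ m * a₂ := by
    rw [div_le_iff₀ ha₂] at hm; linarith
  linarith



lemma summable_dom (hc : ∀ k : ℕ, 1 ≤ k → 0 < c k)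
    (hlarge : ∀ M : ℝ, ∃ N : ℕ, ∀ k ≥ N, M ≤ c k) (hϑ : 0 < ϑ) :
    Summable (fun k : ℕ => ((k : ℝ) + 1) * ϑ ^ k / cfact c k) := by
  have cf := cfact_pos hc
  apply summable_of_ratio_norm_eventually_le (r := 1/2) (by norm_num)
  obtain ⟨N, hN⟩ := hlarge (4 * ϑ)
  filter_upwards [Filter.eventually_ge_atTop N] with k hk
  have hcK : 4 * ϑ ≤ c (k + 1) := hN (k+1) (le_trans hk (Nat.le_succ k))
  have hck : 0 < c (k+1) := hc _ (Nat.succ_le_succ (Nat.zero_le k))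
  have hcf := cf k
  have h1 : (0:ℝ) < ((k:ℝ)+1) * ϑ ^ k / cfact c k := div_pos (by positivity) hcf
  have h2 : (0:ℝ) < (((k+1:ℕ):ℝ)+1) * ϑ ^ (k+1) / cfact c (k+1) :=
    div_pos (by positivity) (cf (k+1))
  rw [Real.norm_eq_abs, Real.norm_eq_abs, abs_of_pos h2, abs_of_pos h1]
  have hcf1 : cfact c (k+1) = cfact c k * c (k+1) := rfl
  rw [hcf1, div_le_iff₀ (mul_pos hcf hck)]
  have e : 1/2 * (((k:ℝ)+1)*ϑ^k/cfact c k) * (cfact c k * c (k+1))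
      = 1/2*((k:ℝ)+1)*ϑ^k*c (k+1) := by field_simp
  rw [e]
  push_cast
  have hϑk : (0:ℝ) ≤ ϑ ^ k := by positivity
  rw [pow_succ]
  nlinarith [mul_le_mul_of_nonneg_left hcK (by positivity : (0:ℝ) ≤ 1/2*((k:ℝ)+1)*ϑ^k),
    mul_nonneg (mul_nonneg hϑk hϑ.le) (Nat.cast_nonneg (α := ℝ) k), mul_nonneg hϑk hϑ.le]

/-- The fundamental symmetrization identity. -/
lemma key_identity (hc : ∀ k : ℕ, 1 ≤ k → 0 < c k) (hϑ : 0 < ϑ) (hϑ' : 0 < ϑ')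
    (w : ℕ → ℝ) (hw0 : ∀ k, 0 ≤ w k)
    (hsw : Summable (fun k : ℕ => w k * (ϑ ^ k / cfact c k)))
    (hsw' : Summable (fun k : ℕ => w k * (ϑ' ^ k / cfact c k)))
    (hf : Summable (fun k : ℕ => ϑ ^ k / cfact c k))
    (hf' : Summable (fun k : ℕ => ϑ' ^ k / cfact c k)) :
    2 * ((∑' k : ℕ, w k * (ϑ' ^ k / cfact c k)) * Zfun c ϑ
        - (∑' k : ℕ, w k * (ϑ ^ k / cfact c k)) * Zfun c ϑ')
      = ∑' p : ℕ × ℕ, (w p.1 - w p.2) *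
          (ϑ' ^ p.1 / cfact c p.1 * (ϑ ^ p.2 / cfact c p.2)
            - ϑ' ^ p.2 / cfact c p.2 * (ϑ ^ p.1 / cfact c p.1)) ∧
    Summable (fun p : ℕ × ℕ => (w p.1 - w p.2) *
          (ϑ' ^ p.1 / cfact c p.1 * (ϑ ^ p.2 / cfact c p.2)
            - ϑ' ^ p.2 / cfact c p.2 * (ϑ ^ p.1 / cfact c p.1))) := by
  have cfp := cfact_pos hc
  set F : ℕ → ℝ := fun k => ϑ ^ k / cfact c k with hF
  set F' : ℕ → ℝ := fun k => ϑ' ^ k / cfact c k with hF'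
  have hFpos : ∀ k, 0 ≤ F k := fun k => le_of_lt (div_pos (by positivity) (cfp k))
  have hF'pos : ∀ k, 0 ≤ F' k := fun k => le_of_lt (div_pos (by positivity) (cfp k))
  have hWpos : ∀ k, 0 ≤ w k * F k := fun k => mul_nonneg (hw0 k) (hFpos k)
  have hW'pos : ∀ k, 0 ≤ w k * F' k := fun k => mul_nonneg (hw0 k) (hF'pos k)
  -- product sums
  have hA : Summable (fun p : ℕ × ℕ => (w p.1 * F' p.1) * F p.2) :=
    hsw'.mul_of_nonneg hf hW'pos hFpos
  have hB : Summable (fun p : ℕ × ℕ => (w p.1 * F p.1) * F' p.2) :=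
    hsw.mul_of_nonneg hf' hWpos hF'pos
  have eA : (∑' k, w k * F' k) * Zfun c ϑ = ∑' p : ℕ × ℕ, (w p.1 * F' p.1) * F p.2 :=
    Summable.tsum_mul_tsum hsw' hf hA
  have eB : (∑' k, w k * F k) * Zfun c ϑ' = ∑' p : ℕ × ℕ, (w p.1 * F p.1) * F' p.2 :=
    Summable.tsum_mul_tsum hsw hf' hB
  -- swap B
  set D : ℕ × ℕ → ℝ := fun p => (w p.1 * F' p.1) * F p.2 - (w p.2 * F p.2) * F' p.1 with hD
  have hBswap : Summable (fun p : ℕ × ℕ => (w p.2 * F p.2) * F' p.1) := by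
    have := hB.comp_injective (Equiv.prodComm ℕ ℕ).injective
    exact this
  have eBswap : (∑' p : ℕ × ℕ, (w p.1 * F p.1) * F' p.2)
      = ∑' p : ℕ × ℕ, (w p.2 * F p.2) * F' p.1 := by
    rw [← (Equiv.prodComm ℕ ℕ).tsum_eq (fun p : ℕ × ℕ => (w p.1 * F p.1) * F' p.2)]
    rfl
  have hDsum : Summable D := hA.sub hBswap
  have eD : (∑' k, w k * F' k) * Zfun c ϑ - (∑' k, w k * F k) * Zfun c ϑ'
      = ∑' p, D p := by
    rw [eA, eB, eBswap, Summable.tsum_sub hA hBswap]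
  have hDswap : Summable (fun p : ℕ × ℕ => D p.swap) := by
    have := hDsum.comp_injective (Equiv.prodComm ℕ ℕ).injective
    exact this
  have eDswap : (∑' p, D p) = ∑' p : ℕ × ℕ, D p.swap := by
    rw [← (Equiv.prodComm ℕ ℕ).tsum_eq D]
    rfl
  constructor
  · rw [eD]
    have : (2 : ℝ) * (∑' p, D p) = (∑' p, D p) + (∑' p : ℕ × ℕ, D p.swap) := by
      rw [← eDswap]; ring
    rw [this, ← Summable.tsum_add hDsum hDswap]
    apply tsum_congr
    intro p
    simp only [hD, Prod.fst_swap, Prod.snd_swap, hF, hF']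
    ring
  · apply (hDsum.add hDswap).congr
    intro p
    simp only [hD, Prod.fst_swap, Prod.snd_swap, hF, hF']
    ring

lemma summable_w (hc : ∀ k : ℕ, 1 ≤ k → 0 < c k)
    (hlarge : ∀ M : ℝ, ∃ N : ℕ, ∀ k ≥ N, M ≤ c k) (hϑ : 0 < ϑ)
    (w : ℕ → ℝ) (A : ℝ) (hw0 : ∀ k, 0 ≤ w k) (hwle : ∀ k, w k ≤ A * ((k : ℝ) + 1)) :
    Summable (fun k : ℕ => w k * (ϑ ^ k / cfact c k)) := by
  have cfp := cfact_pos hc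
  have hdom : Summable (fun k : ℕ => A * (((k : ℝ) + 1) * ϑ ^ k / cfact c k)) :=
    (summable_dom hc hlarge hϑ).mul_left A
  apply Summable.of_nonneg_of_le _ _ hdom
  · intro k
    exact mul_nonneg (hw0 k) (le_of_lt (div_pos (by positivity) (cfp k)))
  · intro k
    have h1 : w k * (ϑ ^ k / cfact c k) ≤ (A * ((k : ℝ) + 1)) * (ϑ ^ k / cfact c k) :=
      mul_le_mul_of_nonneg_right (hwle k) (le_of_lt (div_pos (by positivity) (cfp k)))
    calc w k * (ϑ ^ k / cfact c k) ≤ (A * ((k : ℝ) + 1)) * (ϑ ^ k / cfact c k) := h1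
    _ = A * (((k : ℝ) + 1) * ϑ ^ k / cfact c k) := by ring

lemma Zfun_pos (hc : ∀ k : ℕ, 1 ≤ k → 0 < c k)
    (hf : Summable (fun k : ℕ => ϑ ^ k / cfact c k)) (hϑ : 0 < ϑ) : 0 < Zfun c ϑ := by
  have cfp := cfact_pos hc
  have h0 : (ϑ : ℝ) ^ 0 / cfact c 0 = 1 := by norm_num [cfact]
  have := Summable.le_tsum hf 0 (fun j _ => le_of_lt (div_pos (by positivity) (cfp j)))
  rw [h0] at this
  exact lt_of_lt_of_le one_pos this

lemma rho_eq (hc : ∀ k : ℕ, 1 ≤ k → 0 < c k) (hϑ : 0 < ϑ)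
    (hf : Summable (fun k : ℕ => ϑ ^ k / cfact c k)) :
    rho c ϑ = (∑' k : ℕ, (k : ℝ) * (ϑ ^ k / cfact c k)) / Zfun c ϑ := by
  have cfp := cfact_pos hc
  have hZ := Zfun_pos hc hf hϑ
  rw [rho, ← tsum_div_const]
  apply tsum_congr
  intro k
  rw [mu]
  field_simp

lemma csum_eq (h0 : c 0 = 0) (hc : ∀ k : ℕ, 1 ≤ k → 0 < c k)
    (hcs : Summable (fun k : ℕ => c k * (ϑ ^ k / cfact c k))) :
    ∑' k : ℕ, c k * (ϑ ^ k / cfact c k) = ϑ * Zfun c ϑ := by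
  have cfp := cfact_pos hc
  rw [Summable.tsum_eq_zero_add hcs]
  have e0 : c 0 * (ϑ ^ 0 / cfact c 0) = 0 := by rw [h0]; ring
  rw [e0, zero_add]
  have : ∀ k : ℕ, c (k + 1) * (ϑ ^ (k + 1) / cfact c (k + 1)) = ϑ * (ϑ ^ k / cfact c k) := by
    intro k
    have hck : c (k + 1) ≠ 0 := ne_of_gt (hc _ (Nat.succ_le_succ (Nat.zero_le k)))
    have hcf : cfact c k ≠ 0 := ne_of_gt (cfp k)
    show c (k + 1) * (ϑ ^ (k + 1) / (cfact c k * c (k + 1))) = _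
    rw [pow_succ]
    field_simp
  rw [tsum_congr this, tsum_mul_left]
  rfl

lemma sign_term (hϑ : 0 < ϑ) (hle : ϑ ≤ ϑ') (j k : ℕ) :
    0 ≤ ((j : ℝ) - k) * (ϑ' ^ j * ϑ ^ k - ϑ' ^ k * ϑ ^ j) := by
  have hϑ' : 0 < ϑ' := lt_of_lt_of_le hϑ hle
  rcases le_total k j with h | h
  · obtain ⟨m, rfl⟩ := Nat.exists_eq_add_of_le h
    have hp : ϑ ^ m ≤ ϑ' ^ m := pow_le_pow_left₀ hϑ.le hle m
    have e1 : ((k + m : ℕ) : ℝ) - k = m := by push_cast; ring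
    have e2 : ϑ' ^ (k + m) * ϑ ^ k - ϑ' ^ k * ϑ ^ (k + m)
        = (ϑ' ^ k * ϑ ^ k) * (ϑ' ^ m - ϑ ^ m) := by rw [pow_add, pow_add]; ring
    rw [e1, e2]
    have h1 : (0:ℝ) ≤ ϑ' ^ k * ϑ ^ k := by positivity
    exact mul_nonneg (Nat.cast_nonneg m) (mul_nonneg h1 (sub_nonneg.2 hp))
  · obtain ⟨m, rfl⟩ := Nat.exists_eq_add_of_le h
    have hp : ϑ ^ m ≤ ϑ' ^ m := pow_le_pow_left₀ hϑ.le hle m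
    have e1 : ((j : ℕ) : ℝ) - ((j + m : ℕ) : ℝ) = -m := by push_cast; ring
    have e2 : ϑ' ^ j * ϑ ^ (j + m) - ϑ' ^ (j + m) * ϑ ^ j
        = -((ϑ' ^ j * ϑ ^ j) * (ϑ' ^ m - ϑ ^ m)) := by rw [pow_add, pow_add]; ring
    rw [e1, e2]
    have h1 : (0:ℝ) ≤ ϑ' ^ j * ϑ ^ j := by positivity
    have := mul_nonneg (Nat.cast_nonneg (α := ℝ) m) (mul_nonneg h1 (sub_nonneg.2 hp))
    nlinarith

lemma term_reduce (hc : ∀ k : ℕ, 1 ≤ k → 0 < c k) (w : ℕ → ℝ) (p : ℕ × ℕ) :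
    (w p.1 - w p.2) * (ϑ' ^ p.1 / cfact c p.1 * (ϑ ^ p.2 / cfact c p.2)
        - ϑ' ^ p.2 / cfact c p.2 * (ϑ ^ p.1 / cfact c p.1))
      = (w p.1 - w p.2) * (ϑ' ^ p.1 * ϑ ^ p.2 - ϑ' ^ p.2 * ϑ ^ p.1)
          / (cfact c p.1 * cfact c p.2) := by
  have h1 := (cfact_pos hc p.1).ne'
  have h2 := (cfact_pos hc p.2).ne'
  field_simp


/-- Core inequalities: strict monotonicity of `rho` and the Lipschitz bound. -/
lemma core (h0 : c 0 = 0) (hc : ∀ k : ℕ, 1 ≤ k → 0 < c k)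
    (hLG : ∀ k : ℕ, |c (k + 1) - c k| ≤ a₁)
    (hlarge : ∀ M : ℝ, ∃ N : ℕ, ∀ k ≥ N, M ≤ c k)
    (hϑ : 0 < ϑ) (hϑ' : 0 < ϑ') (hlt : ϑ < ϑ') :
    rho c ϑ < rho c ϑ' ∧ ϑ' - ϑ ≤ a₁ * (rho c ϑ' - rho c ϑ) := by
  have cfp := cfact_pos hc
  have ha₁0 : 0 ≤ a₁ := le_trans (abs_nonneg _) (hLG 0)
  have hca : ∀ k : ℕ, c k ≤ a₁ * k := by
    intro k
    have := c_lip hLG 0 k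
    rw [h0] at this
    simp only [Nat.cast_zero, sub_zero] at this
    have hk : (0:ℝ) ≤ (k:ℝ) := Nat.cast_nonneg k
    rw [abs_of_nonneg hk] at this
    exact le_trans (le_abs_self _) this
  -- summability
  have hf : Summable (fun k : ℕ => ϑ ^ k / cfact c k) := by
    have := summable_w hc hlarge hϑ (fun _ => 1) 1 (fun _ => zero_le_one)
      (fun k => by simp)
    exact this.congr (fun k => one_mul _)
  have hf' : Summable (fun k : ℕ => ϑ' ^ k / cfact c k) := by
    have := summable_w hc hlarge hϑ' (fun _ => 1) 1 (fun _ => zero_le_one)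
      (fun k => by simp)
    exact this.congr (fun k => one_mul _)
  have hkf : Summable (fun k : ℕ => (k : ℝ) * (ϑ ^ k / cfact c k)) :=
    summable_w hc hlarge hϑ (fun k => (k : ℝ)) 1 (fun k => Nat.cast_nonneg k)
      (fun k => by simp)
  have hkf' : Summable (fun k : ℕ => (k : ℝ) * (ϑ' ^ k / cfact c k)) :=
    summable_w hc hlarge hϑ' (fun k => (k : ℝ)) 1 (fun k => Nat.cast_nonneg k)
      (fun k => by simp)
  have hcnn : ∀ k, 0 ≤ c k := by
    intro k
    cases k with
    | zero => simp [h0]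
    | succ n => exact (hc _ (Nat.succ_le_succ (Nat.zero_le n))).le
  have hcw : ∀ k : ℕ, c k ≤ a₁ * ((k : ℝ) + 1) := by
    intro k
    have := hca k
    nlinarith [Nat.cast_nonneg (α := ℝ) k]
  have hcs : Summable (fun k : ℕ => c k * (ϑ ^ k / cfact c k)) :=
    summable_w hc hlarge hϑ c a₁ hcnn hcw
  have hcs' : Summable (fun k : ℕ => c k * (ϑ' ^ k / cfact c k)) :=
    summable_w hc hlarge hϑ' c a₁ hcnn hcw
  have hZ := Zfun_pos hc hf hϑ
  have hZ' := Zfun_pos hc hf' hϑ'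
  set S : ℝ := ∑' k : ℕ, (k : ℝ) * (ϑ ^ k / cfact c k) with hS
  set S' : ℝ := ∑' k : ℕ, (k : ℝ) * (ϑ' ^ k / cfact c k) with hS'
  obtain ⟨idq, idsum⟩ := key_identity hc hϑ hϑ' (fun k => (k : ℝ))
    (fun k => Nat.cast_nonneg k) hkf hkf' hf hf'
  obtain ⟨cq, csum⟩ := key_identity hc hϑ hϑ' c hcnn hcs hcs' hf hf'
  -- strict positivity of the id-sum
  have hGnn : ∀ p : ℕ × ℕ, 0 ≤ ((p.1 : ℝ) - p.2) *
      (ϑ' ^ p.1 / cfact c p.1 * (ϑ ^ p.2 / cfact c p.2)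
        - ϑ' ^ p.2 / cfact c p.2 * (ϑ ^ p.1 / cfact c p.1)) := by
    intro p
    rw [term_reduce hc (fun k => (k : ℝ)) p]
    exact div_nonneg (sign_term hϑ hlt.le p.1 p.2)
      (le_of_lt (mul_pos (cfp p.1) (cfp p.2)))
  have hone : (0 : ℝ) < ((((1:ℕ) : ℝ)) - ((0:ℕ) : ℝ)) *
      (ϑ' ^ (1:ℕ) / cfact c 1 * (ϑ ^ (0:ℕ) / cfact c 0)
        - ϑ' ^ (0:ℕ) / cfact c 0 * (ϑ ^ (1:ℕ) / cfact c 1)) := by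
    rw [term_reduce hc (fun k => (k : ℝ)) ((1:ℕ), (0:ℕ))]
    apply div_pos _ (mul_pos (cfp 1) (cfp 0))
    simp only [pow_one, pow_zero, Nat.cast_one, Nat.cast_zero, sub_zero, mul_one, one_mul]
    linarith
  have hidpos : 0 < 2 * (S' * Zfun c ϑ - S * Zfun c ϑ') := by
    rw [idq]
    have hle := Summable.le_tsum idsum ((1:ℕ), (0:ℕ)) (fun j _ => hGnn j)
    exact lt_of_lt_of_le hone hle
  -- termwise Lipschitz comparison
  have hcomp : ∀ p : ℕ × ℕ, (c p.1 - c p.2) *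
      (ϑ' ^ p.1 / cfact c p.1 * (ϑ ^ p.2 / cfact c p.2)
        - ϑ' ^ p.2 / cfact c p.2 * (ϑ ^ p.1 / cfact c p.1))
      ≤ a₁ * (((p.1 : ℝ) - p.2) *
      (ϑ' ^ p.1 / cfact c p.1 * (ϑ ^ p.2 / cfact c p.2)
        - ϑ' ^ p.2 / cfact c p.2 * (ϑ ^ p.1 / cfact c p.1))) := by
    intro p
    rw [term_reduce hc c p, term_reduce hc (fun k => (k : ℝ)) p, ← mul_div_assoc]
    have hD : 0 < cfact c p.1 * cfact c p.2 := mul_pos (cfp p.1) (cfp p.2)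
    rw [div_le_div_iff₀ hD hD]
    have hs := sign_term hϑ hlt.le p.1 p.2
    have hl := c_lip hLG p.2 p.1
    have key : (c p.1 - c p.2) * (ϑ' ^ p.1 * ϑ ^ p.2 - ϑ' ^ p.2 * ϑ ^ p.1)
        ≤ a₁ * (((p.1 : ℝ) - p.2) * (ϑ' ^ p.1 * ϑ ^ p.2 - ϑ' ^ p.2 * ϑ ^ p.1)) := by
      calc (c p.1 - c p.2) * (ϑ' ^ p.1 * ϑ ^ p.2 - ϑ' ^ p.2 * ϑ ^ p.1)
          ≤ |(c p.1 - c p.2) * (ϑ' ^ p.1 * ϑ ^ p.2 - ϑ' ^ p.2 * ϑ ^ p.1)| := le_abs_self _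
      _ = |c p.1 - c p.2| * |ϑ' ^ p.1 * ϑ ^ p.2 - ϑ' ^ p.2 * ϑ ^ p.1| := abs_mul _ _
      _ ≤ (a₁ * |((p.1 : ℝ)) - p.2|) * |ϑ' ^ p.1 * ϑ ^ p.2 - ϑ' ^ p.2 * ϑ ^ p.1| :=
            mul_le_mul_of_nonneg_right (hl) (abs_nonneg _)
      _ = a₁ * |(((p.1 : ℝ)) - p.2) * (ϑ' ^ p.1 * ϑ ^ p.2 - ϑ' ^ p.2 * ϑ ^ p.1)| := by
            rw [abs_mul]; ring
      _ = a₁ * ((((p.1 : ℝ)) - p.2) * (ϑ' ^ p.1 * ϑ ^ p.2 - ϑ' ^ p.2 * ϑ ^ p.1)) := by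
            rw [abs_of_nonneg hs]
    nlinarith [key, hD]
  have hcle : 2 * ((∑' k : ℕ, c k * (ϑ' ^ k / cfact c k)) * Zfun c ϑ
      - (∑' k : ℕ, c k * (ϑ ^ k / cfact c k)) * Zfun c ϑ')
      ≤ a₁ * (2 * (S' * Zfun c ϑ - S * Zfun c ϑ')) := by
    rw [cq, idq]
    calc (∑' p : ℕ × ℕ, (c p.1 - c p.2) *
          (ϑ' ^ p.1 / cfact c p.1 * (ϑ ^ p.2 / cfact c p.2)
            - ϑ' ^ p.2 / cfact c p.2 * (ϑ ^ p.1 / cfact c p.1)))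
        ≤ ∑' p : ℕ × ℕ, a₁ * ((((p.1 : ℝ)) - p.2) *
          (ϑ' ^ p.1 / cfact c p.1 * (ϑ ^ p.2 / cfact c p.2)
            - ϑ' ^ p.2 / cfact c p.2 * (ϑ ^ p.1 / cfact c p.1))) :=
          Summable.tsum_le_tsum hcomp csum (idsum.mul_left a₁)
    _ = a₁ * ∑' p : ℕ × ℕ, ((((p.1 : ℝ)) - p.2) *
          (ϑ' ^ p.1 / cfact c p.1 * (ϑ ^ p.2 / cfact c p.2)
            - ϑ' ^ p.2 / cfact c p.2 * (ϑ ^ p.1 / cfact c p.1))) := tsum_mul_left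
  rw [csum_eq h0 hc hcs, csum_eq h0 hc hcs'] at hcle
  have hρ : rho c ϑ = S / Zfun c ϑ := rho_eq hc hϑ hf
  have hρ' : rho c ϑ' = S' / Zfun c ϑ' := rho_eq hc hϑ' hf'
  constructor
  · rw [hρ, hρ', div_lt_div_iff₀ hZ hZ']
    linarith [hidpos]
  · have hSm : S = rho c ϑ * Zfun c ϑ := by rw [hρ]; field_simp
    have hS'm : S' = rho c ϑ' * Zfun c ϑ' := by rw [hρ']; field_simp
    rw [hSm, hS'm] at hcle
    nlinarith [hcle, mul_pos hZ hZ']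

lemma theta_le (h0 : c 0 = 0) (hc : ∀ k : ℕ, 1 ≤ k → 0 < c k)
    (hLG : ∀ k : ℕ, |c (k + 1) - c k| ≤ a₁)
    (hlarge : ∀ M : ℝ, ∃ N : ℕ, ∀ k ≥ N, M ≤ c k)
    (hϑ : 0 < ϑ) : ϑ ≤ a₁ * rho c ϑ := by
  have cfp := cfact_pos hc
  have ha₁0 : 0 ≤ a₁ := le_trans (abs_nonneg _) (hLG 0)
  have hca : ∀ k : ℕ, c k ≤ a₁ * k := by
    intro k
    have := c_lip hLG 0 k
    rw [h0] at this
    simp only [Nat.cast_zero, sub_zero] at this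
    have hk : (0:ℝ) ≤ (k:ℝ) := Nat.cast_nonneg k
    rw [abs_of_nonneg hk] at this
    exact le_trans (le_abs_self _) this
  have hcnn : ∀ k, 0 ≤ c k := by
    intro k
    cases k with
    | zero => simp [h0]
    | succ n => exact (hc _ (Nat.succ_le_succ (Nat.zero_le n))).le
  have hf : Summable (fun k : ℕ => ϑ ^ k / cfact c k) := by
    have := summable_w hc hlarge hϑ (fun _ => 1) 1 (fun _ => zero_le_one) (fun k => by simp)
    exact this.congr (fun k => one_mul _)
  have hkf : Summable (fun k : ℕ => (k : ℝ) * (ϑ ^ k / cfact c k)) :=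
    summable_w hc hlarge hϑ (fun k => (k : ℝ)) 1 (fun k => Nat.cast_nonneg k) (fun k => by simp)
  have hcw : ∀ k : ℕ, c k ≤ a₁ * ((k : ℝ) + 1) := by
    intro k
    have := hca k
    nlinarith [Nat.cast_nonneg (α := ℝ) k]
  have hcs : Summable (fun k : ℕ => c k * (ϑ ^ k / cfact c k)) :=
    summable_w hc hlarge hϑ c a₁ hcnn hcw
  have hZ := Zfun_pos hc hf hϑ
  have hterm : ∀ k : ℕ, c k * (ϑ ^ k / cfact c k) ≤ a₁ * ((k : ℝ) * (ϑ ^ k / cfact c k)) := by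
    intro k
    have hFk : 0 ≤ ϑ ^ k / cfact c k := le_of_lt (div_pos (by positivity) (cfp k))
    have := mul_le_mul_of_nonneg_right (hca k) hFk
    calc c k * (ϑ ^ k / cfact c k) ≤ a₁ * (k : ℝ) * (ϑ ^ k / cfact c k) := this
    _ = a₁ * ((k : ℝ) * (ϑ ^ k / cfact c k)) := by ring
  have hle : ∑' k : ℕ, c k * (ϑ ^ k / cfact c k)
      ≤ a₁ * ∑' k : ℕ, (k : ℝ) * (ϑ ^ k / cfact c k) := by
    calc ∑' k : ℕ, c k * (ϑ ^ k / cfact c k)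
        ≤ ∑' k : ℕ, a₁ * ((k : ℝ) * (ϑ ^ k / cfact c k)) :=
          Summable.tsum_le_tsum hterm hcs (hkf.mul_left a₁)
    _ = a₁ * ∑' k : ℕ, (k : ℝ) * (ϑ ^ k / cfact c k) := tsum_mul_left
  rw [csum_eq h0 hc hcs] at hle
  rw [rho_eq hc hϑ hf]
  rw [mul_div_assoc', le_div_iff₀ hZ]
  calc ϑ * Zfun c ϑ ≤ a₁ * ∑' k : ℕ, (k : ℝ) * (ϑ ^ k / cfact c k) := hle

end aux

set_option maxHeartbeats 2000000 in
/-- There is a finite constant `L`, depending only on `a₁`, `a₂`, `k₀`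
(and independent of `r₂`), such that for all `ϑ, ϑ′ > 0` with `ρ(ϑ) > r₂`, `ρ(ϑ′) > r₂`:
`|φ₁(ϑ; r₂) − φ₁(ϑ′; r₂)| ≤ L·|ρ¹(ϑ; r₂) − ρ¹(ϑ′; r₂)|`, and `ρ¹(ϑ; r₂) < ρ¹(ϑ′; r₂)`
implies `φ₁(ϑ; r₂) < φ₁(ϑ′; r₂)`: the colour-1 fugacity, as a function of the colour-1
density at fixed colour-2 density, is Lipschitz and strictly increasing. -/
theorem stmt11 (a₁ a₂ : ℝ) (k₀ : ℕ) (hk₀ : 1 ≤ k₀) (ha₂ : 0 < a₂) :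
    ∃ L : ℝ, ∀ c : ℕ → ℝ, c 0 = 0 → (∀ k : ℕ, 1 ≤ k → 0 < c k) →
      (∀ k : ℕ, |c (k + 1) - c k| ≤ a₁) →
      (∀ k : ℕ, a₂ ≤ c (k + k₀) - c k) →
      ∀ r₂ : ℝ, 0 ≤ r₂ →
        ∀ ϑ ϑ' : ℝ, 0 < ϑ → 0 < ϑ' → r₂ < rho c ϑ → r₂ < rho c ϑ' →
          |fug1 c ϑ r₂ - fug1 c ϑ' r₂| ≤ L * |dens1 c ϑ r₂ - dens1 c ϑ' r₂| ∧
          (dens1 c ϑ r₂ < dens1 c ϑ' r₂ → fug1 c ϑ r₂ < fug1 c ϑ' r₂) := by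
  refine ⟨2 * |a₁| + 1, ?_⟩
  intro c h0 hc hLG hM r₂ hr₂ ϑ ϑ' hϑ hϑ' hρϑ hρϑ'
  have hlarge := c_large h0 hc hM ha₂
  have ha₁0 : 0 ≤ a₁ := le_trans (abs_nonneg _) (hLG 0)
  have habs : |a₁| = a₁ := abs_of_nonneg ha₁0
  -- main helper for ordered pair x < y
  have main : ∀ x y : ℝ, 0 < x → 0 < y → r₂ < rho c x → r₂ < rho c y → x < y →
      fug1 c x r₂ < fug1 c y r₂ ∧
      fug1 c y r₂ - fug1 c x r₂ ≤ 2 * a₁ * (rho c y - rho c x) := by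
    intro x y hx hy hrx hry hxy
    obtain ⟨hmono, hlip⟩ := core h0 hc hLG hlarge hx hy hxy
    have htx := theta_le h0 hc hLG hlarge hx
    have hρx : 0 < rho c x := lt_of_le_of_lt hr₂ hrx
    have hρy : 0 < rho c y := lt_of_le_of_lt hr₂ hry
    simp only [fug1]
    set ρx := rho c x with hρxd
    set ρy := rho c y with hρyd
    have key : r₂ * (y * ρx - x * ρy) < ρx * ρy * (y - x) := by
      rcases le_or_gt (y * ρx - x * ρy) 0 with hT | hT
      · have h1 : r₂ * (y * ρx - x * ρy) ≤ 0 := mul_nonpos_of_nonneg_of_nonpos hr₂ hT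
        nlinarith [mul_pos (mul_pos hρx hρy) (sub_pos.2 hxy)]
      · have h1 : r₂ * (y * ρx - x * ρy) < ρx * (y * ρx - x * ρy) :=
          mul_lt_mul_of_pos_right hrx hT
        have h2 : ρx * (y * ρx - x * ρy) ≤ ρx * ρy * (y - x) := by
          nlinarith [mul_nonneg (mul_nonneg hρx.le hy.le) (sub_nonneg.2 hmono.le)]
        linarith
    constructor
    · rw [div_lt_div_iff₀ hρx hρy]
      nlinarith [key]
    · rw [div_sub_div _ _ (ne_of_gt hρy) (ne_of_gt hρx), div_le_iff₀ (mul_pos hρy hρx)]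
      have hB1 : r₂ * (x * ρy - y * ρx) ≤ r₂ * (x * ρy - x * ρx) := by
        nlinarith [mul_nonneg hr₂ (mul_nonneg (sub_pos.2 hxy).le hρx.le)]
      have hB2 : r₂ * (x * ρy - x * ρx) ≤ ρx * (a₁ * ρx) * (ρy - ρx) := by
        have e : r₂ * (x * ρy - x * ρx) = (r₂ * x) * (ρy - ρx) := by ring
        rw [e]
        apply mul_le_mul_of_nonneg_right _ (sub_pos.2 hmono).le
        have e2 : ρx * (a₁ * ρx) = ρx * (a₁ * ρx) := rfl
        nlinarith [mul_le_mul hrx.le htx hx.le hρx.le]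
      have hB3 : ρx * (a₁ * ρx) * (ρy - ρx) ≤ a₁ * ρx * ρy * (ρy - ρx) := by
        nlinarith [mul_nonneg (mul_nonneg ha₁0 hρx.le) (mul_nonneg (sub_pos.2 hmono).le (sub_pos.2 hmono).le)]
      have hB4 : ρx * ρy * (y - x) ≤ a₁ * ρx * ρy * (ρy - ρx) := by
        nlinarith [mul_pos hρx hρy]
      nlinarith [hB1, hB2, hB3, hB4]
  rcases lt_trichotomy ϑ ϑ' with h | h | h
  · obtain ⟨hm, hl⟩ := main ϑ ϑ' hϑ hϑ' hρϑ hρϑ' h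
    obtain ⟨hmono, -⟩ := core h0 hc hLG hlarge hϑ hϑ' h
    constructor
    · have e1 : dens1 c ϑ r₂ - dens1 c ϑ' r₂ = rho c ϑ - rho c ϑ' := by
        simp [dens1]
      rw [e1, abs_sub_comm, abs_of_pos (sub_pos.2 hm), abs_sub_comm,
        abs_of_pos (sub_pos.2 hmono)]
      rw [habs]
      nlinarith [sub_pos.2 hmono]
    · intro _; exact hm
  · subst h
    simp
  · obtain ⟨hm, hl⟩ := main ϑ' ϑ hϑ' hϑ hρϑ' hρϑ h
    obtain ⟨hmono, -⟩ := core h0 hc hLG hlarge hϑ' hϑ h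
    constructor
    · have e1 : dens1 c ϑ r₂ - dens1 c ϑ' r₂ = rho c ϑ - rho c ϑ' := by
        simp [dens1]
      rw [e1, abs_of_pos (sub_pos.2 hm), abs_of_pos (sub_pos.2 hmono), habs]
      nlinarith [sub_pos.2 hmono]
    · intro hd
      exfalso
      have : rho c ϑ < rho c ϑ' := by simpa [dens1] using hd
      linarith
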